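/- arXiv:2110.02355 — 6 statements merged into one kernel-verified Lean document; each statement's English description precedes it below -/
import Mathlib

section
/- Let $V$ be the optimal value function of a finite MDP $\langle \mathcal{S}, \mathcal{A}, P, r, \gamma \rangle$ with normalized discounted reward criterion, i.e., $V$ is the unique fixed point of the Bellman optimality operator $[B_* v](s) = \max_{a} [(1-\gamma) r(s,a) + \gamma \sum_{s'} P(s'|s,a) v(s')]$. Then $\mathrm{Span}(V) \le \mathrm{Span}(r)$, where $\mathrm{Span}(f) = \max f - \min f$. -/
/-- **Span of the optimal value function of a finite MDP is bounded by the span of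
the reward** (normalized discounted criterion). -/
theorem stmt2 {S A : Type*} [Fintype S] [Fintype A] [Nonempty S] [Nonempty A]
    (P : S → A → S → ℝ)
    (hP0 : ∀ s a s', 0 ≤ P s a s') (hP1 : ∀ s a, ∑ s', P s a s' = 1)
    (r : S → A → ℝ) (γ : ℝ) (hγ0 : 0 < γ) (hγ1 : γ < 1)
    (V : S → ℝ)
    (hV : ∀ s, V s = ⨆ a, ((1 - γ) * r s a + γ * ∑ s', P s a s' * V s')) :
    (⨆ s, V s) - (⨅ s, V s) ≤
      (⨆ p : S × A, r p.1 p.2) - (⨅ p : S × A, r p.1 p.2) := by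
  have hγ0' : (0:ℝ) ≤ 1 - γ := by linarith
  obtain ⟨s0, hs0⟩ := Finite.exists_max V
  obtain ⟨s1, hs1⟩ := Finite.exists_min V
  have hMe : (⨆ s, V s) = V s0 :=
    le_antisymm (ciSup_le hs0)
      (le_ciSup (Set.Finite.bddAbove (Set.finite_range V)) s0)
  have hme : (⨅ s, V s) = V s1 :=
    le_antisymm (ciInf_le (Set.Finite.bddBelow (Set.finite_range V)) s1)
      (le_ciInf hs1)
  have hRmax : ∀ s a, r s a ≤ ⨆ p : S × A, r p.1 p.2 := fun s a =>
    le_ciSup (f := fun p : S × A => r p.1 p.2) (Set.Finite.bddAbove (Set.finite_range _)) ⟨s, a⟩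
  have hRmin : ∀ s a, (⨅ p : S × A, r p.1 p.2) ≤ r s a := fun s a =>
    ciInf_le (f := fun p : S × A => r p.1 p.2) (Set.Finite.bddBelow (Set.finite_range _)) ⟨s, a⟩
  -- upper bound: V s0 ≤ Rmax
  have hup : V s0 ≤ ⨆ p : S × A, r p.1 p.2 := by
    have h1 : V s0 ≤ (1 - γ) * (⨆ p : S × A, r p.1 p.2) + γ * V s0 := by
      conv_lhs => rw [hV s0]
      refine ciSup_le fun a => ?_
      have h2 : ∑ s', P s0 a s' * V s' ≤ V s0 := by
        calc ∑ s', P s0 a s' * V s' ≤ ∑ s', P s0 a s' * V s0 :=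
              Finset.sum_le_sum fun s' _ =>
                mul_le_mul_of_nonneg_left (hs0 s') (hP0 s0 a s')
          _ = V s0 := by rw [← Finset.sum_mul, hP1 s0 a, one_mul]
      have h3 : (1 - γ) * r s0 a ≤ (1 - γ) * ⨆ p : S × A, r p.1 p.2 :=
        mul_le_mul_of_nonneg_left (hRmax s0 a) hγ0'
      nlinarith [mul_le_mul_of_nonneg_left h2 hγ0.le]
    nlinarith
  -- lower bound: Rmin ≤ V s1
  have hlo : (⨅ p : S × A, r p.1 p.2) ≤ V s1 := by
    obtain ⟨a⟩ := ‹Nonempty A›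
    have h1 : (1 - γ) * (⨅ p : S × A, r p.1 p.2) + γ * V s1 ≤ V s1 := by
      have h2 : V s1 ≤ ∑ s', P s1 a s' * V s' := by
        calc V s1 = ∑ s', P s1 a s' * V s1 := by
              rw [← Finset.sum_mul, hP1 s1 a, one_mul]
          _ ≤ ∑ s', P s1 a s' * V s' :=
              Finset.sum_le_sum fun s' _ =>
                mul_le_mul_of_nonneg_left (hs1 s') (hP0 s1 a s')
      have h3 : (1 - γ) * (⨅ p : S × A, r p.1 p.2) ≤ (1 - γ) * r s1 a :=
        mul_le_mul_of_nonneg_left (hRmin s1 a) hγ0'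
      have h4 : (1 - γ) * r s1 a + γ * ∑ s', P s1 a s' * V s' ≤ V s1 := by
        rw [hV s1]
        exact le_ciSup (f := fun a => (1 - γ) * r s1 a + γ * ∑ s', P s1 a s' * V s') (Set.Finite.bddAbove (Set.finite_range _)) a
      nlinarith [mul_le_mul_of_nonneg_left h2 hγ0.le]
    nlinarith
  rw [hMe, hme]
  exact sub_le_sub hup hlo
end

section
/- Let $\mathcal{M} = \langle \mathcal{S}, \mathcal{A}, P, r, \gamma\rangle$ and $\widehat{\mathcal{M}} = \langle \mathcal{S}, \mathcal{A}, \widehat P, \hat r, \gamma\rangle$ be finite MDPs with the same state/action spaces and discount, such that $|r(s,a) - \hat r(s,a)| \le \varepsilon$ for all $(s,a)$. Let $V$ be the optimal value of $\mathcal{M}$, $\hat\pi$ an optimal strategy of $\widehat{\mathcal{M}}$ with value $\hat V_{\hat\pi}$ (optimal value of $\widehat{\mathcal{M}}$), and define $\Delta_{\hat\pi} = \max_{s,a} |\sum_{s'} [P(s'|s,a) - \widehat P(s'|s,a)]\hat V_{\hat\pi}(s')|$. Then $\|V - \hat V_{\hat\pi}\|_\infty \le \varepsilon + \gamma \Delta_{\hat\pi}/(1-\gamma)$.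 -/
lemma sup_abs_diff {A : Type*} [Fintype A] [Nonempty A] (f g : A → ℝ) (c : ℝ)
    (h : ∀ a, |f a - g a| ≤ c) : |(⨆ a, f a) - ⨆ a, g a| ≤ c := by
  have bf : BddAbove (Set.range f) := (Set.finite_range f).bddAbove
  have bg : BddAbove (Set.range g) := (Set.finite_range g).bddAbove
  rw [abs_sub_le_iff]
  constructor
  · have : (⨆ a, f a) ≤ (⨆ a, g a) + c := by
      apply ciSup_le
      intro a
      have := (abs_sub_le_iff.mp (h a)).1
      linarith [le_ciSup bg a]
    linarith
  · have : (⨆ a, g a) ≤ (⨆ a, f a) + c := by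
      apply ciSup_le
      intro a
      have := (abs_sub_le_iff.mp (h a)).2
      linarith [le_ciSup bf a]
    linarith

/-- Closeness of the optimal value functions of two finite MDPs that differ only in
rewards (by at most `ε`) and transitions. -/
theorem stmt5 {S A : Type*} [Fintype S] [Fintype A] [Nonempty S] [Nonempty A]
    (γ : ℝ) (hγ0 : 0 < γ) (hγ1 : γ < 1)
    (P Phat : S → A → S → ℝ)
    (hP0 : ∀ s a s', 0 ≤ P s a s') (hP1 : ∀ s a, ∑ s', P s a s' = 1)
    (hPhat0 : ∀ s a s', 0 ≤ Phat s a s') (hPhat1 : ∀ s a, ∑ s', Phat s a s' = 1)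
    (r rhat : S → A → ℝ) (ε : ℝ)
    (hε : ∀ s a, |r s a - rhat s a| ≤ ε)
    -- `V` : optimal value function of the true MDP `M`
    (V : S → ℝ)
    (hV : ∀ s, V s = ⨆ a, ((1 - γ) * r s a + γ * ∑ s', P s a s' * V s'))
    -- `Vhat` : optimal value function of the approximate MDP `M̂`
    (Vhat : S → ℝ)
    (hVhat : ∀ s, Vhat s =
      ⨆ a, ((1 - γ) * rhat s a + γ * ∑ s', Phat s a s' * Vhat s'))
    (Δ : ℝ)
    (hΔ : Δ = ⨆ p : S × A, |∑ s', (P p.1 p.2 s' - Phat p.1 p.2 s') * Vhat s'|) :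
    ∀ s, |V s - Vhat s| ≤ ε + γ * Δ / (1 - γ) := by
  have hΔge : ∀ s a, |∑ s', (P s a s' - Phat s a s') * Vhat s'| ≤ Δ := by
    intro s a
    rw [hΔ]
    exact le_ciSup (f := fun p : S × A => |∑ s', (P p.1 p.2 s' - Phat p.1 p.2 s') * Vhat s'|)
      ((Set.finite_range _).bddAbove) (⟨s, a⟩ : S × A)
  obtain ⟨s₀, hs₀⟩ := Finite.exists_max (fun s => |V s - Vhat s|)
  have key : |V s₀ - Vhat s₀| ≤ (1 - γ) * ε + γ * Δ + γ * |V s₀ - Vhat s₀| := by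
    conv_lhs => rw [hV s₀, hVhat s₀]
    apply sup_abs_diff
    intro a
    have e1 : (∑ s', P s₀ a s' * V s') - ∑ s', Phat s₀ a s' * Vhat s'
        = (∑ s', P s₀ a s' * (V s' - Vhat s'))
          + ∑ s', (P s₀ a s' - Phat s₀ a s') * Vhat s' := by
      rw [← Finset.sum_add_distrib, ← Finset.sum_sub_distrib]
      exact Finset.sum_congr rfl fun s' _ => by ring
    have expand : ((1 - γ) * r s₀ a + γ * ∑ s', P s₀ a s' * V s') -
        ((1 - γ) * rhat s₀ a + γ * ∑ s', Phat s₀ a s' * Vhat s') =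
        (1 - γ) * (r s₀ a - rhat s₀ a)
        + γ * (∑ s', P s₀ a s' * (V s' - Vhat s'))
        + γ * (∑ s', (P s₀ a s' - Phat s₀ a s') * Vhat s') := by
      linear_combination γ * e1
    rw [expand]
    have h1 : |(1 - γ) * (r s₀ a - rhat s₀ a)| ≤ (1 - γ) * ε := by
      rw [abs_mul, abs_of_nonneg (by linarith : (0:ℝ) ≤ 1 - γ)]
      exact mul_le_mul_of_nonneg_left (hε s₀ a) (by linarith)
    have h2 : |∑ s', P s₀ a s' * (V s' - Vhat s')| ≤ |V s₀ - Vhat s₀| := by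
      calc |∑ s', P s₀ a s' * (V s' - Vhat s')|
          ≤ ∑ s', |P s₀ a s' * (V s' - Vhat s')| := Finset.abs_sum_le_sum_abs _ _
        _ ≤ ∑ s', P s₀ a s' * |V s₀ - Vhat s₀| := by
            apply Finset.sum_le_sum
            intro s' _
            rw [abs_mul, abs_of_nonneg (hP0 s₀ a s')]
            exact mul_le_mul_of_nonneg_left (hs₀ s') (hP0 s₀ a s')
        _ = |V s₀ - Vhat s₀| := by rw [← Finset.sum_mul, hP1, one_mul]
    have h3 := hΔge s₀ a
    have hb2 : |γ * ∑ s', P s₀ a s' * (V s' - Vhat s')| ≤ γ * |V s₀ - Vhat s₀| := by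
      rw [abs_mul, abs_of_pos hγ0]
      exact mul_le_mul_of_nonneg_left h2 hγ0.le
    have hb3 : |γ * ∑ s', (P s₀ a s' - Phat s₀ a s') * Vhat s'| ≤ γ * Δ := by
      rw [abs_mul, abs_of_pos hγ0]
      exact mul_le_mul_of_nonneg_left h3 hγ0.le
    calc |(1 - γ) * (r s₀ a - rhat s₀ a)
        + γ * (∑ s', P s₀ a s' * (V s' - Vhat s'))
        + γ * (∑ s', (P s₀ a s' - Phat s₀ a s') * Vhat s')|
        ≤ |(1 - γ) * (r s₀ a - rhat s₀ a)|
        + |γ * (∑ s', P s₀ a s' * (V s' - Vhat s'))|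
        + |γ * (∑ s', (P s₀ a s' - Phat s₀ a s') * Vhat s')| := abs_add_three _ _ _
      _ ≤ (1 - γ) * ε + γ * Δ + γ * |V s₀ - Vhat s₀| := by linarith
  have hpos : (0:ℝ) < 1 - γ := by linarith
  have hDle : |V s₀ - Vhat s₀| ≤ ε + γ * Δ / (1 - γ) := by
    have h4 : |V s₀ - Vhat s₀| - ε ≤ γ * Δ / (1 - γ) := by
      rw [le_div_iff₀ hpos]
      nlinarith [key]
    linarith
  intro s
  exact le_trans (hs₀ s) hDle
end

section
/- (Robustness of MDP optimal strategies to model approximation.) Let $\widehat{\mathcal{M}}$ be an $(\varepsilon, \delta)$-approximation of the finite MDP $\mathcal{M}$ with respect to a function class $\mathfrak{F}$: $|r(s,a)-\hat r(s,a)| \le \varepsilon$ and $d_{\mathfrak{F}}(P(\cdot|s,a), \widehat P(\cdot|s,a)) \le \delta$ for all $(s,a)$. Let $\hat\pi$ be an optimal strategy of $\widehat{\mathcal{M}}$ with optimal value function $\hat V_{\hat\pi}$. Then $\hat\pi$ is $\alpha$-optimal for $\mathcal{M}$ with $\alpha \le 2(\varepsilon + \gamma \delta \rho_{\mathfrak{F}}(\hat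 V_{\hat\pi})/(1-\gamma))$, i.e., $V_{\hat\pi}(s) \ge V_*(s) - \alpha$ for all states $s$, where $V_*$ is the optimal value of $\mathcal{M}$ and $V_{\hat\pi}$ the value of $\hat\pi$ in $\mathcal{M}$. -/
private lemma ciSup_abs_sub_le' {A : Type*} [Fintype A] [Nonempty A]
    (f h : A → ℝ) (c : ℝ) (hc : ∀ a, |f a - h a| ≤ c) :
    |(⨆ a, f a) - ⨆ a, h a| ≤ c := by
  have bf : BddAbove (Set.range f) := (Set.finite_range f).bddAbove
  have bh : BddAbove (Set.range h) := (Set.finite_range h).bddAbove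
  rw [abs_sub_le_iff]
  constructor
  · refine sub_le_iff_le_add.2 (ciSup_le fun a => ?_)
    have h1 := (abs_sub_le_iff.1 (hc a)).1
    have h2 : h a ≤ ⨆ a, h a := le_ciSup bh a
    linarith
  · refine sub_le_iff_le_add.2 (ciSup_le fun a => ?_)
    have h1 := (abs_sub_le_iff.1 (hc a)).2
    have h2 : f a ≤ ⨆ a, f a := le_ciSup bf a
    linarith

/-- **Robustness of MDP optimal strategies to model approximation.**  If `M̂` is an
`(ε, δ)`-approximation of `M` with respect to an IPM `dF` with Minkowski functional
`ρF`, then any optimal strategy `π̂` of `M̂` is `2(ε + γδρF(V̂_π̂)/(1-γ))`-optimal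
for `M`. -/
theorem stmt7 {S A : Type*} [Fintype S] [Fintype A] [Nonempty S] [Nonempty A]
    (γ : ℝ) (hγ0 : 0 < γ) (hγ1 : γ < 1)
    (P Phat : S → A → S → ℝ)
    (hP0 : ∀ s a s', 0 ≤ P s a s') (hP1 : ∀ s a, ∑ s', P s a s' = 1)
    (hPhat0 : ∀ s a s', 0 ≤ Phat s a s') (hPhat1 : ∀ s a, ∑ s', Phat s a s' = 1)
    (r rhat : S → A → ℝ)
    -- IPM `dF` and Minkowski functional `ρF` for a function class `F`
    (dF : (S → ℝ) → (S → ℝ) → ℝ) (ρF : (S → ℝ) → ℝ)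
    (hMink : ∀ (f : S → ℝ) (μ ν : S → ℝ), (∀ s, 0 ≤ μ s) → (∑ s, μ s = 1) →
      (∀ s, 0 ≤ ν s) → (∑ s, ν s = 1) →
      |∑ s', f s' * μ s' - ∑ s', f s' * ν s'| ≤ ρF f * dF μ ν)
    (hρ0 : ∀ f, 0 ≤ ρF f)
    -- `(ε, δ)`-approximation
    (ε δ : ℝ) (hε0 : 0 ≤ ε) (hδ0 : 0 ≤ δ)
    (hε : ∀ s a, |r s a - rhat s a| ≤ ε)
    (hδ : ∀ s a, dF (P s a) (Phat s a) ≤ δ)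
    -- `π̂` : an optimal strategy of `M̂`, with value function `V̂_π̂`
    (πhat : S → A → ℝ)
    (hπ0 : ∀ s a, 0 ≤ πhat s a) (hπ1 : ∀ s, ∑ a, πhat s a = 1)
    (Vhatπ : S → ℝ)
    (hVhatπ : ∀ s, Vhatπ s =
      ∑ a, πhat s a * ((1 - γ) * rhat s a + γ * ∑ s', Phat s a s' * Vhatπ s'))
    (hVhatopt : ∀ s, Vhatπ s =
      ⨆ a, ((1 - γ) * rhat s a + γ * ∑ s', Phat s a s' * Vhatπ s'))
    -- `V*` : optimal value of `M`; `Vπ` : value of `π̂` in `M`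
    (Vstar : S → ℝ)
    (hVstar : ∀ s, Vstar s = ⨆ a, ((1 - γ) * r s a + γ * ∑ s', P s a s' * Vstar s'))
    (Vπ : S → ℝ)
    (hVπ : ∀ s, Vπ s =
      ∑ a, πhat s a * ((1 - γ) * r s a + γ * ∑ s', P s a s' * Vπ s')) :
    ∀ s, Vπ s ≥ Vstar s - 2 * (ε + γ * δ * ρF Vhatπ / (1 - γ)) := by
  have hγ1' : (0:ℝ) < 1 - γ := by linarith
  set ρ := ρF Vhatπ with hρdef
  -- the IPM error term, per state-action pair
  have hIPM : ∀ s a,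
      |∑ s', P s a s' * Vhatπ s' - ∑ s', Phat s a s' * Vhatπ s'| ≤ ρ * δ := by
    intro s a
    have h := hMink Vhatπ (P s a) (Phat s a) (hP0 s a) (hP1 s a) (hPhat0 s a) (hPhat1 s a)
    have h2 : ρ * dF (P s a) (Phat s a) ≤ ρ * δ :=
      mul_le_mul_of_nonneg_left (hδ s a) (hρ0 Vhatπ)
    calc |∑ s', P s a s' * Vhatπ s' - ∑ s', Phat s a s' * Vhatπ s'|
        = |∑ s', Vhatπ s' * P s a s' - ∑ s', Vhatπ s' * Phat s a s'| := by
          simp only [mul_comm]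
      _ ≤ ρ * dF (P s a) (Phat s a) := h
      _ ≤ ρ * δ := h2
  -- the key per-action bound, generic in the value function on the `M` side
  have key : ∀ (V : S → ℝ) (M : ℝ), (∀ s, |V s - Vhatπ s| ≤ M) → ∀ s a,
      |((1 - γ) * r s a + γ * ∑ s', P s a s' * V s') -
        ((1 - γ) * rhat s a + γ * ∑ s', Phat s a s' * Vhatπ s')| ≤
      (1 - γ) * ε + γ * M + γ * (ρ * δ) := by
    intro V M hM s a
    have hM0 : 0 ≤ M := le_trans (abs_nonneg _) (hM (Classical.arbitrary S))
    have h2 : |∑ s', P s a s' * V s' - ∑ s', P s a s' * Vhatπ s'| ≤ M := by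
      rw [← Finset.sum_sub_distrib]
      calc |∑ s', (P s a s' * V s' - P s a s' * Vhatπ s')|
          ≤ ∑ s', |P s a s' * V s' - P s a s' * Vhatπ s'| :=
            Finset.abs_sum_le_sum_abs _ _
        _ ≤ ∑ s', P s a s' * M := by
            refine Finset.sum_le_sum fun s' _ => ?_
            rw [← mul_sub, abs_mul, abs_of_nonneg (hP0 s a s')]
            exact mul_le_mul_of_nonneg_left (hM s') (hP0 s a s')
        _ = M := by rw [← Finset.sum_mul, hP1 s a, one_mul]
    have h3 := hIPM s a
    have h1 := hε s a
    have decomp : ((1 - γ) * r s a + γ * ∑ s', P s a s' * V s') -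
        ((1 - γ) * rhat s a + γ * ∑ s', Phat s a s' * Vhatπ s') =
        (1 - γ) * (r s a - rhat s a) +
        γ * (∑ s', P s a s' * V s' - ∑ s', P s a s' * Vhatπ s') +
        γ * (∑ s', P s a s' * Vhatπ s' - ∑ s', Phat s a s' * Vhatπ s') := by ring
    rw [decomp]
    have habs := abs_add_three ((1 - γ) * (r s a - rhat s a))
      (γ * (∑ s', P s a s' * V s' - ∑ s', P s a s' * Vhatπ s'))
      (γ * (∑ s', P s a s' * Vhatπ s' - ∑ s', Phat s a s' * Vhatπ s'))
    rw [abs_mul, abs_mul, abs_mul, abs_of_nonneg (le_of_lt hγ1'),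
      abs_of_nonneg (le_of_lt hγ0)] at habs
    have b1 : (1 - γ) * |r s a - rhat s a| ≤ (1 - γ) * ε :=
      mul_le_mul_of_nonneg_left h1 (le_of_lt hγ1')
    have b2 : γ * |∑ s', P s a s' * V s' - ∑ s', P s a s' * Vhatπ s'| ≤ γ * M :=
      mul_le_mul_of_nonneg_left h2 (le_of_lt hγ0)
    have b3 : γ * |∑ s', P s a s' * Vhatπ s' - ∑ s', Phat s a s' * Vhatπ s'| ≤ γ * (ρ * δ) :=
      mul_le_mul_of_nonneg_left h3 (le_of_lt hγ0)
    linarith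
  -- bound for the fixed-point gap, generic fixed-point argument
  have fixpt : ∀ (V : S → ℝ) (M : ℝ), 0 ≤ M → (∀ s, |V s - Vhatπ s| ≤ M) →
      (∀ s, |V s - Vhatπ s| ≤ (1 - γ) * ε + γ * M + γ * (ρ * δ)) →
      M ≤ ε + γ * δ * ρ / (1 - γ) → True := fun _ _ _ _ _ _ => trivial
  clear fixpt
  -- Step 1: ‖Vstar - Vhatπ‖ ≤ β
  have hstar : ∀ s, |Vstar s - Vhatπ s| ≤ ε + γ * δ * ρ / (1 - γ) := by
    obtain ⟨s0, hs0⟩ := Finite.exists_max fun s => |Vstar s - Vhatπ s|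
    set M := |Vstar s0 - Vhatπ s0| with hMdef
    have hM0 : 0 ≤ M := abs_nonneg _
    have hMle : M ≤ (1 - γ) * ε + γ * M + γ * (ρ * δ) := by
      conv_lhs => rw [hMdef, hVstar s0, hVhatopt s0]
      exact ciSup_abs_sub_le' _ _ _ (fun a => key Vstar M hs0 s0 a)
    have hMfin : M ≤ ε + γ * δ * ρ / (1 - γ) := by
      rw [← sub_le_iff_le_add'] at hMle
      have : M - ε ≤ γ * δ * ρ / (1 - γ) := by
        rw [le_div_iff₀ hγ1']
        nlinarith
      linarith
    intro s
    exact le_trans (hs0 s) hMfin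
  -- Step 2: ‖Vπ - Vhatπ‖ ≤ β
  have hpi : ∀ s, |Vπ s - Vhatπ s| ≤ ε + γ * δ * ρ / (1 - γ) := by
    obtain ⟨s0, hs0⟩ := Finite.exists_max fun s => |Vπ s - Vhatπ s|
    set M := |Vπ s0 - Vhatπ s0| with hMdef
    have hM0 : 0 ≤ M := abs_nonneg _
    have hMle : M ≤ (1 - γ) * ε + γ * M + γ * (ρ * δ) := by
      conv_lhs => rw [hMdef, hVπ s0, hVhatπ s0, ← Finset.sum_sub_distrib]
      calc |∑ a, (πhat s0 a * ((1 - γ) * r s0 a + γ * ∑ s', P s0 a s' * Vπ s') -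
              πhat s0 a * ((1 - γ) * rhat s0 a + γ * ∑ s', Phat s0 a s' * Vhatπ s'))|
          ≤ ∑ a, |πhat s0 a * ((1 - γ) * r s0 a + γ * ∑ s', P s0 a s' * Vπ s') -
              πhat s0 a * ((1 - γ) * rhat s0 a + γ * ∑ s', Phat s0 a s' * Vhatπ s')| :=
            Finset.abs_sum_le_sum_abs _ _
        _ ≤ ∑ a, πhat s0 a * ((1 - γ) * ε + γ * M + γ * (ρ * δ)) := by
            refine Finset.sum_le_sum fun a _ => ?_
            rw [← mul_sub, abs_mul, abs_of_nonneg (hπ0 s0 a)]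
            exact mul_le_mul_of_nonneg_left (key Vπ M hs0 s0 a) (hπ0 s0 a)
        _ = (1 - γ) * ε + γ * M + γ * (ρ * δ) := by
            rw [← Finset.sum_mul, hπ1 s0, one_mul]
    have hMfin : M ≤ ε + γ * δ * ρ / (1 - γ) := by
      have : M - ε ≤ γ * δ * ρ / (1 - γ) := by
        rw [le_div_iff₀ hγ1']
        nlinarith
      linarith
    intro s
    exact le_trans (hs0 s) hMfin
  intro s
  have h1 := (abs_sub_le_iff.1 (hstar s)).1
  have h2 := (abs_sub_le_iff.1 (hpi s)).2
  have : γ * δ * ρF Vhatπ / (1 - γ) = γ * δ * ρ / (1 - γ) := by rw [hρdef]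
  linarith
end

section
/- (Lipschitz continuity of the optimal value function.) Suppose the state space $\mathcal{S}$ of a finite MDP is a metric space with metric $d$, and the MDP is $(L_r, L_P)$-Lipschitz: $|r(s_1,a) - r(s_2,a)| \le L_r d(s_1,s_2)$ and $W_1(P(\cdot|s_1,a), P(\cdot|s_2,a)) \le L_P d(s_1,s_2)$ for all $s_1, s_2, a$, where $W_1$ is the Wasserstein-1 distance. If $\gamma L_P < 1$, then the optimal value function $V$ (for the normalized criterion) satisfies $\mathrm{Lip}(V) \le (1-\gamma)L_r/(1-\gamma L_P)$. -/
/-- Wasserstein-1 distance between two probability mass functions on a finite metric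
space, as the IPM over 1-Lipschitz functions. -/
noncomputable def W1 {S : Type*} [Fintype S] [MetricSpace S] (μ ν : S → ℝ) : ℝ :=
  sSup {d : ℝ | ∃ f : S → ℝ, LipschitzWith 1 f ∧
    d = |∑ s, f s * μ s - ∑ s, f s * ν s|}

lemma W1_bddAbove {S : Type*} [Fintype S] [MetricSpace S] [Nonempty S]
    (μ ν : S → ℝ) (hμ0 : ∀ s, 0 ≤ μ s) (hν0 : ∀ s, 0 ≤ ν s)
    (hμ1 : ∑ s, μ s = 1) (hν1 : ∑ s, ν s = 1) :
    BddAbove {d : ℝ | ∃ f : S → ℝ, LipschitzWith 1 f ∧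
      d = |∑ s, f s * μ s - ∑ s, f s * ν s|} := by
  obtain ⟨s₀⟩ := ‹Nonempty S›
  obtain ⟨D, hD⟩ := Finite.exists_le (fun s : S => dist s s₀)
  have hD0 : 0 ≤ D := le_trans (by simp) (hD s₀)
  refine ⟨2 * D, ?_⟩
  rintro d ⟨f, hf, rfl⟩
  have key : ∑ s, f s * μ s - ∑ s, f s * ν s
      = ∑ s, (f s - f s₀) * (μ s - ν s) := by
    have h : ∀ s : S, (f s - f s₀) * (μ s - ν s)
        = (f s * μ s - f s * ν s - f s₀ * μ s) + f s₀ * ν s := fun s => by ring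
    simp_rw [h]
    rw [Finset.sum_add_distrib, Finset.sum_sub_distrib, Finset.sum_sub_distrib,
      ← Finset.mul_sum, ← Finset.mul_sum, hμ1, hν1]
    ring
  rw [key]
  calc |∑ s, (f s - f s₀) * (μ s - ν s)|
      ≤ ∑ s, |(f s - f s₀) * (μ s - ν s)| := Finset.abs_sum_le_sum_abs _ _
    _ ≤ ∑ s, D * (μ s + ν s) := by
        apply Finset.sum_le_sum
        intro s _
        rw [abs_mul]
        have h1 : |f s - f s₀| ≤ D := by
          have := hf.dist_le_mul s s₀
          simp only [NNReal.coe_one, one_mul, Real.dist_eq] at this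
          exact this.trans (hD s)
        have h2 : |μ s - ν s| ≤ μ s + ν s := by
          rw [abs_sub_le_iff]; constructor <;> nlinarith [hμ0 s, hν0 s]
        exact mul_le_mul h1 h2 (abs_nonneg _) hD0
    _ = 2 * D := by
        rw [← Finset.mul_sum, Finset.sum_add_distrib, hμ1, hν1]; ring

lemma abs_ciSup_sub {A : Type*} [Fintype A] [Nonempty A] (f g : A → ℝ) (C : ℝ)
    (h : ∀ a, |f a - g a| ≤ C) : |(⨆ a, f a) - ⨆ a, g a| ≤ C := by
  have hbf : BddAbove (Set.range f) := Set.Finite.bddAbove (Set.finite_range f)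
  have hbg : BddAbove (Set.range g) := Set.Finite.bddAbove (Set.finite_range g)
  rw [abs_sub_le_iff]
  constructor
  · rw [sub_le_iff_le_add]
    apply ciSup_le; intro a
    have h1 : f a - g a ≤ C := (abs_sub_le_iff.1 (h a)).1
    have h2 : g a ≤ ⨆ a, g a := le_ciSup hbg a
    linarith
  · rw [sub_le_iff_le_add]
    apply ciSup_le; intro a
    have h1 : g a - f a ≤ C := (abs_sub_le_iff.1 (h a)).2
    have h2 : f a ≤ ⨆ a, f a := le_ciSup hbf a
    linarith

/-- **Lipschitz continuity of the optimal value function** of an `(L_r, L_P)`-Lipschitz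
finite MDP with `γ L_P < 1` (normalized discounted criterion). -/
theorem stmt9 {S A : Type*} [Fintype S] [Fintype A] [Nonempty S] [Nonempty A]
    [MetricSpace S]
    (γ : ℝ) (hγ0 : 0 < γ) (hγ1 : γ < 1)
    (P : S → A → S → ℝ)
    (hP0 : ∀ s a s', 0 ≤ P s a s') (hP1 : ∀ s a, ∑ s', P s a s' = 1)
    (r : S → A → ℝ)
    (Lr LP : ℝ) (hLr0 : 0 ≤ Lr) (hLP0 : 0 ≤ LP)
    (hLr : ∀ s₁ s₂ a, |r s₁ a - r s₂ a| ≤ Lr * dist s₁ s₂)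
    (hLP : ∀ s₁ s₂ a, W1 (P s₁ a) (P s₂ a) ≤ LP * dist s₁ s₂)
    (hγLP : γ * LP < 1)
    (V : S → ℝ)
    (hV : ∀ s, V s = ⨆ a, ((1 - γ) * r s a + γ * ∑ s', P s a s' * V s')) :
    ∀ s₁ s₂, |V s₁ - V s₂| ≤ ((1 - γ) * Lr / (1 - γ * LP)) * dist s₁ s₂ := by
  classical
  obtain ⟨s₀⟩ := ‹Nonempty S›
  have h1γLP : 0 < 1 - γ * LP := by linarith
  have h1γ : 0 ≤ 1 - γ := by linarith
  -- Lipschitz constant of V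
  set Q : Set ℝ := (fun p : S × S => |V p.1 - V p.2| / dist p.1 p.2) '' Set.univ with hQ
  have hQfin : Q.Finite := Set.Finite.image _ Set.finite_univ
  have hQne : Q.Nonempty := ⟨_, ⟨(s₀, s₀), trivial, rfl⟩⟩
  set M := sSup Q with hMdef
  have hMmem : M ∈ Q := hQne.csSup_mem hQfin
  have hMub : ∀ a b : S, |V a - V b| / dist a b ≤ M := fun a b =>
    le_csSup hQfin.bddAbove ⟨(a, b), trivial, rfl⟩
  have hM0 : 0 ≤ M := le_trans (by simp) (hMub s₀ s₀)
  have hVlip : ∀ a b : S, |V a - V b| ≤ M * dist a b := by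
    intro a b
    rcases eq_or_ne a b with rfl | h
    · simp
    · have hd : 0 < dist a b := dist_pos.2 h
      calc |V a - V b| = |V a - V b| / dist a b * dist a b := by field_simp
        _ ≤ M * dist a b := mul_le_mul_of_nonneg_right (hMub a b) hd.le
  -- Expectation step
  have hexp : ∀ s₁ s₂ a, |(∑ s', P s₁ a s' * V s') - ∑ s', P s₂ a s' * V s'|
      ≤ M * (LP * dist s₁ s₂) := by
    intro s₁ s₂ a
    rcases eq_or_lt_of_le hM0 with hM0' | hMpos
    · -- M = 0 : V constant
      have hconst : ∀ s, V s = V s₀ := by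
        intro s
        have h1 := hVlip s s₀
        rw [← hM0', zero_mul] at h1
        have := abs_nonneg (V s - V s₀)
        have : |V s - V s₀| = 0 := le_antisymm h1 this
        have := abs_eq_zero.1 this
        linarith
      have e1 : ∑ s', P s₁ a s' * V s' = V s₀ := by
        rw [show (∑ s', P s₁ a s' * V s') = ∑ s', P s₁ a s' * V s₀ from
          Finset.sum_congr rfl (fun s _ => by rw [hconst s]),
          ← Finset.sum_mul, hP1, one_mul]
      have e2 : ∑ s', P s₂ a s' * V s' = V s₀ := by
        rw [show (∑ s', P s₂ a s' * V s') = ∑ s', P s₂ a s' * V s₀ from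
          Finset.sum_congr rfl (fun s _ => by rw [hconst s]),
          ← Finset.sum_mul, hP1, one_mul]
      rw [e1, e2, sub_self, abs_zero]
      positivity
    · -- M > 0 : V/M is 1-Lipschitz
      set f : S → ℝ := fun s => V s / M with hfdef
      have hf : LipschitzWith 1 f := by
        rw [lipschitzWith_iff_dist_le_mul]
        intro x y
        simp only [NNReal.coe_one, one_mul, Real.dist_eq, hfdef]
        rw [div_sub_div_same, abs_div, abs_of_pos hMpos, div_le_iff₀ hMpos]
        calc |V x - V y| ≤ M * dist x y := hVlip x y
          _ = dist x y * M := mul_comm _ _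
      have hmem : |(∑ s, f s * P s₁ a s) - ∑ s, f s * P s₂ a s| ∈
          {d : ℝ | ∃ g : S → ℝ, LipschitzWith 1 g ∧
            d = |∑ s, g s * P s₁ a s - ∑ s, g s * P s₂ a s|} := ⟨f, hf, rfl⟩
      have hbdd := W1_bddAbove (P s₁ a) (P s₂ a) (hP0 s₁ a) (hP0 s₂ a) (hP1 s₁ a) (hP1 s₂ a)
      have hle : |(∑ s, f s * P s₁ a s) - ∑ s, f s * P s₂ a s| ≤ W1 (P s₁ a) (P s₂ a) :=
        le_csSup hbdd hmem
      have heq : |(∑ s', P s₁ a s' * V s') - ∑ s', P s₂ a s' * V s'|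
          = M * |(∑ s, f s * P s₁ a s) - ∑ s, f s * P s₂ a s| := by
        rw [← abs_of_pos hMpos, ← abs_mul, mul_sub, Finset.mul_sum, Finset.mul_sum]
        congr 2
        · apply Finset.sum_congr rfl
          intro s _
          simp only [hfdef]
          field_simp
        · apply Finset.sum_congr rfl
          intro s _
          simp only [hfdef]
          field_simp
      rw [heq]
      calc M * |(∑ s, f s * P s₁ a s) - ∑ s, f s * P s₂ a s|
          ≤ M * W1 (P s₁ a) (P s₂ a) := mul_le_mul_of_nonneg_left hle hM0
        _ ≤ M * (LP * dist s₁ s₂) := mul_le_mul_of_nonneg_left (hLP s₁ s₂ a) hM0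
  -- Main contraction estimate
  have hsup : ∀ s₁ s₂ : S, |V s₁ - V s₂|
      ≤ ((1 - γ) * Lr + γ * (LP * M)) * dist s₁ s₂ := by
    intro s₁ s₂
    rw [hV s₁, hV s₂]
    apply abs_ciSup_sub
    intro a
    have h1 := hLr s₁ s₂ a
    have h2 := hexp s₁ s₂ a
    have hγ0' : (0:ℝ) ≤ γ := hγ0.le
    calc |((1 - γ) * r s₁ a + γ * ∑ s', P s₁ a s' * V s')
          - ((1 - γ) * r s₂ a + γ * ∑ s', P s₂ a s' * V s')|
        = |(1 - γ) * (r s₁ a - r s₂ a)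
          + γ * ((∑ s', P s₁ a s' * V s') - ∑ s', P s₂ a s' * V s')| := by ring_nf
      _ ≤ |(1 - γ) * (r s₁ a - r s₂ a)|
          + |γ * ((∑ s', P s₁ a s' * V s') - ∑ s', P s₂ a s' * V s')| := abs_add_le _ _
      _ = (1 - γ) * |r s₁ a - r s₂ a|
          + γ * |(∑ s', P s₁ a s' * V s') - ∑ s', P s₂ a s' * V s'| := by
            rw [abs_mul, abs_mul, abs_of_nonneg h1γ, abs_of_nonneg hγ0']
      _ ≤ (1 - γ) * (Lr * dist s₁ s₂) + γ * (M * (LP * dist s₁ s₂)) := by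
            exact add_le_add (mul_le_mul_of_nonneg_left h1 h1γ)
              (mul_le_mul_of_nonneg_left h2 hγ0')
      _ = ((1 - γ) * Lr + γ * (LP * M)) * dist s₁ s₂ := by ring
  -- Conclude M ≤ L
  have hMle : M ≤ (1 - γ) * Lr / (1 - γ * LP) := by
    have key : M ≤ (1 - γ) * Lr + γ * (LP * M) := by
      obtain ⟨⟨a, b⟩, -, hab⟩ := hMmem
      rcases eq_or_ne a b with rfl | hne
      · conv_lhs => rw [← hab]
        simp only [sub_self, abs_zero, zero_div]
        have h1 := mul_nonneg h1γ hLr0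
        have h2 := mul_nonneg hγ0.le (mul_nonneg hLP0 hM0)
        linarith
      · have hd : 0 < dist a b := dist_pos.2 hne
        conv_lhs => rw [← hab]
        simp only
        rw [div_le_iff₀ hd]
        exact hsup a b
    rw [le_div_iff₀ h1γLP]
    nlinarith
  intro s₁ s₂
  calc |V s₁ - V s₂| ≤ M * dist s₁ s₂ := hVlip s₁ s₂
    _ ≤ ((1 - γ) * Lr / (1 - γ * LP)) * dist s₁ s₂ :=
        mul_le_mul_of_nonneg_right hMle dist_nonneg
end

section
/- (Main robustness theorem for general-sum Markov games.) Let $\widehat{\mathscr{G}}$ be an $(\varepsilon,\delta)$-approximation of the finite general-sum game $\mathscr{G}$ with respect to IPM $d_{\mathfrak{F}}$, and let $\hat\pi$ be a Markov perfect equilibrium of $\widehat{\mathscr{G}}$. Then $\hat\pi$ is an $\alpha$-approximate MPE of $\mathscr{G}$ with $\alpha^i \le 2(\varepsilon + \gamma \Delta^i_{\hat\pi}/(1-\gamma))$ for each player $i$, where $\Delta^i_{\hat\pi} = \max_{s,a}|\sum_{s'}[P(s'|s,a) - \widehat P(s'|s,a)]\hat V^i_{\hat\pi}(s')|$ and $\hat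 V^i_{\hat\pi}$ is player $i$'s equilibrium value function in $\widehat{\mathscr{G}}$. Moreover $\Delta^i_{\hat\pi} \le \delta\,\rho_{\mathfrak{F}}(\hat V^i_{\hat\pi})$, so $\alpha^i \le 2(\varepsilon + \gamma\delta\rho_{\mathfrak{F}}(\hat V^i_{\hat\pi})/(1-\gamma))$. -/
open Finset Classical

section Game

variable {ι S : Type*} {A : ι → Type*}

/-- `σ i s` is a pmf over `A i` for every player `i` and state `s`. -/
def IsPmfProfile [Fintype ι] [∀ i, Fintype (A i)] [Fintype S]
    (σ : ∀ i, S → A i → ℝ) : Prop :=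
  ∀ i s, (∀ ai, 0 ≤ σ i s ai) ∧ ∑ ai, σ i s ai = 1

/-- `μ s` is a pmf over `B` for every state `s`. -/
def IsPmf {S B : Type*} [Fintype B] (μ : S → B → ℝ) : Prop :=
  ∀ s, (∀ b, 0 ≤ μ s b) ∧ ∑ b, μ s b = 1

variable [Fintype ι] [DecidableEq ι] [∀ i, Fintype (A i)] [Fintype S]

/-- Probability that the players other than `i` play the components of the joint
action `a`, while player `i`'s component is forced to equal `ai`. -/
noncomputable def othersProb (σ : ∀ j, S → A j → ℝ) (i : ι) (s : S) (ai : A i)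
    (a : ∀ j, A j) : ℝ :=
  if a i = ai then ∏ j ∈ Finset.univ.erase i, σ j s (a j) else 0

/-- Marginalized transition kernel of player `i`'s MDP `M^i_{σ^{-i}}`. -/
noncomputable def margP (P : S → (∀ j, A j) → S → ℝ) (σ : ∀ j, S → A j → ℝ) (i : ι)
    (s : S) (ai : A i) (s' : S) : ℝ :=
  ∑ a : ∀ j, A j, othersProb σ i s ai a * P s a s'

/-- Marginalized reward of player `i`'s MDP `M^i_{σ^{-i}}`. -/
noncomputable def margR (r : ι → S → (∀ j, A j) → ℝ) (σ : ∀ j, S → A j → ℝ) (i : ι)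
    (s : S) (ai : A i) : ℝ :=
  ∑ a : ∀ j, A j, othersProb σ i s ai a * r i s a

/-- `V` is the (normalized, discounted) value-function family of the strategy
profile `σ` in the game: for each player it is the fixed point of the Bellman
evaluation operator. -/
def IsGameValue (P : S → (∀ j, A j) → S → ℝ) (r : ι → S → (∀ j, A j) → ℝ)
    (γ : ℝ) (σ : ∀ j, S → A j → ℝ) (V : ι → S → ℝ) : Prop :=
  ∀ i s, V i s = ∑ a : ∀ j, A j, (∏ j, σ j s (a j)) *
    ((1 - γ) * r i s a + γ * ∑ s', P s a s' * V i s')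

/-- `W` is the value function of the strategy `μ` of player `i` in the marginalized
MDP `M^i_{σ^{-i}}`. -/
def IsMargValue (P : S → (∀ j, A j) → S → ℝ) (r : ι → S → (∀ j, A j) → ℝ)
    (γ : ℝ) (σ : ∀ j, S → A j → ℝ) (i : ι) (μ : S → A i → ℝ)
    (W : S → ℝ) : Prop :=
  ∀ s, W s = ∑ ai, μ s ai * ((1 - γ) * margR r σ i s ai +
    γ * ∑ s', margP P σ i s ai s' * W s')

end Game

section Aux

variable {ι S : Type*} {A : ι → Type*}
variable [Fintype ι] [DecidableEq ι] [∀ i, Fintype (A i)] [Fintype S]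

private lemma sum_weighted_le {β : Type*} [Fintype β] (w f : β → ℝ) (c : ℝ)
    (hw : ∀ b, 0 ≤ w b) (hw1 : ∑ b, w b = 1) (hf : ∀ b, f b ≤ c) :
    ∑ b, w b * f b ≤ c := by
  calc ∑ b, w b * f b ≤ ∑ b, w b * c :=
        Finset.sum_le_sum fun b _ => mul_le_mul_of_nonneg_left (hf b) (hw b)
    _ = c := by rw [← Finset.sum_mul, hw1, one_mul]

private lemma abs_sum_weighted_le {β : Type*} [Fintype β] (w f : β → ℝ) (c : ℝ)
    (hw : ∀ b, 0 ≤ w b) (hw1 : ∑ b, w b = 1) (hf : ∀ b, |f b| ≤ c) :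
    |∑ b, w b * f b| ≤ c := by
  calc |∑ b, w b * f b| ≤ ∑ b, |w b * f b| := Finset.abs_sum_le_sum_abs _ _
    _ = ∑ b, w b * |f b| := by
        refine Finset.sum_congr rfl fun b _ => ?_
        rw [abs_mul, abs_of_nonneg (hw b)]
    _ ≤ c := sum_weighted_le w (fun b => |f b|) c hw hw1 hf

private lemma sum_mul_sum_swap {β : Type*} [Fintype β] (o : β → ℝ) (Pk : β → S → ℝ)
    (V : S → ℝ) :
    ∑ a, o a * ∑ s', Pk a s' * V s' = ∑ s', (∑ a, o a * Pk a s') * V s' := by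
  simp_rw [Finset.mul_sum, Finset.sum_mul]
  rw [Finset.sum_comm]
  exact Finset.sum_congr rfl fun s' _ => Finset.sum_congr rfl fun a _ => by ring

private lemma solve_rec {γ ε Δ X : ℝ} (hγ1 : γ < 1)
    (h : X ≤ (1 - γ) * ε + γ * Δ + γ * X) : X ≤ ε + γ * Δ / (1 - γ) := by
  have h1 : 0 < 1 - γ := by linarith
  have h2 : X - ε ≤ γ * Δ / (1 - γ) := by
    rw [le_div_iff₀ h1]; nlinarith
  linarith

private lemma othersProb_eq_prod (σ : ∀ j, S → A j → ℝ) (i : ι) (s : S) (ai : A i)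
    (a : ∀ j, A j) :
    othersProb σ i s ai a =
      ∏ j, Function.update (fun j => σ j s) i (fun b => if b = ai then (1:ℝ) else 0) j (a j) := by
  rw [← Finset.mul_prod_erase Finset.univ _ (Finset.mem_univ i)]
  have h : ∀ j ∈ Finset.univ.erase i,
      Function.update (fun j => σ j s) i (fun b => if b = ai then (1:ℝ) else 0) j (a j)
        = σ j s (a j) := fun j hj => by
    rw [Function.update_of_ne (Finset.ne_of_mem_erase hj)]
  rw [Finset.prod_congr rfl h]
  simp only [Function.update_self]
  by_cases h' : a i = ai <;> simp [othersProb, h']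

private lemma sum_prod_pi (f : ∀ j, A j → ℝ) :
    ∑ a : ∀ j, A j, ∏ j, f j (a j) = ∏ j, ∑ b, f j b := by
  classical
  rw [Finset.prod_univ_sum, Fintype.piFinset_univ]

private lemma othersProb_nonneg (σ : ∀ j, S → A j → ℝ) (hσ : IsPmfProfile σ) (i : ι)
    (s : S) (ai : A i) (a : ∀ j, A j) : 0 ≤ othersProb σ i s ai a := by
  unfold othersProb
  split
  · exact Finset.prod_nonneg fun j _ => (hσ j s).1 (a j)
  · exact le_refl 0

private lemma othersProb_sum_one (σ : ∀ j, S → A j → ℝ) (hσ : IsPmfProfile σ) (i : ι)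
    (s : S) (ai : A i) :
    ∑ a : ∀ j, A j, othersProb σ i s ai a = 1 := by
  simp_rw [othersProb_eq_prod]
  rw [sum_prod_pi]
  apply Finset.prod_eq_one
  intro j _
  by_cases h : j = i
  · subst h; simp [Function.update_self, Finset.sum_ite_eq']
  · rw [Function.update_of_ne h]; exact (hσ j s).2

private lemma margSum (σ : ∀ j, S → A j → ℝ) (i : ι) (μ : S → A i → ℝ)
    (F : (∀ j, A j) → ℝ) (s : S) :
    ∑ a : ∀ j, A j, (∏ j, Function.update σ i μ j s (a j)) * F a
      = ∑ ai, μ s ai * ∑ a : ∀ j, A j, othersProb σ i s ai a * F a := by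
  have step : ∀ a : ∀ j, A j,
      (∏ j, Function.update σ i μ j s (a j))
        = μ s (a i) * ∏ j ∈ Finset.univ.erase i, σ j s (a j) := by
    intro a
    rw [← Finset.mul_prod_erase Finset.univ _ (Finset.mem_univ i)]
    congr 1
    · simp only [Function.update_self]
    · exact Finset.prod_congr rfl fun j hj => by
        rw [Function.update_of_ne (Finset.ne_of_mem_erase hj)]
  calc ∑ a : ∀ j, A j, (∏ j, Function.update σ i μ j s (a j)) * F a
      = ∑ a : ∀ j, A j, ∑ ai, μ s ai * (othersProb σ i s ai a * F a) := by
        refine Finset.sum_congr rfl fun a _ => ?_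
        rw [step a, Finset.sum_eq_single (a i)]
        · unfold othersProb; rw [if_pos rfl]; ring
        · intro ai _ hne
          unfold othersProb
          rw [if_neg fun h => hne h.symm]
          ring
        · intro h; exact absurd (Finset.mem_univ _) h
    _ = ∑ ai, μ s ai * ∑ a : ∀ j, A j, othersProb σ i s ai a * F a := by
        rw [Finset.sum_comm]
        exact Finset.sum_congr rfl fun ai _ => (Finset.mul_sum _ _ _).symm

private lemma toMarg (P : S → (∀ j, A j) → S → ℝ) (r : ι → S → (∀ j, A j) → ℝ)
    (γ : ℝ) (σ : ∀ j, S → A j → ℝ) (i : ι) (μ : S → A i → ℝ) (V : ι → S → ℝ)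
    (h : IsGameValue P r γ (Function.update σ i μ) V) :
    IsMargValue P r γ σ i μ (V i) := by
  intro s
  rw [h i s, margSum σ i μ _ s]
  refine Finset.sum_congr rfl fun ai _ => ?_
  congr 1
  calc ∑ a : ∀ j, A j, othersProb σ i s ai a *
        ((1 - γ) * r i s a + γ * ∑ s', P s a s' * V i s')
      = (1-γ) * ∑ a : ∀ j, A j, othersProb σ i s ai a * r i s a
        + γ * ∑ a : ∀ j, A j, othersProb σ i s ai a * ∑ s', P s a s' * V i s' := by
        rw [Finset.mul_sum, Finset.mul_sum, ← Finset.sum_add_distrib]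
        exact Finset.sum_congr rfl fun a _ => by ring
    _ = (1 - γ) * margR r σ i s ai + γ * ∑ s', margP P σ i s ai s' * V i s' := by
        rw [sum_mul_sum_swap]; rfl

private lemma margP_nonneg (P : S → (∀ j, A j) → S → ℝ) (hP0 : ∀ s a s', 0 ≤ P s a s')
    (σ : ∀ j, S → A j → ℝ) (hσ : IsPmfProfile σ) (i : ι) (s : S) (ai : A i) (s' : S) :
    0 ≤ margP P σ i s ai s' :=
  Finset.sum_nonneg fun a _ => mul_nonneg (othersProb_nonneg σ hσ i s ai a) (hP0 s a s')

private lemma margP_sum_one (P : S → (∀ j, A j) → S → ℝ) (hP1 : ∀ s a, ∑ s', P s a s' = 1)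
    (σ : ∀ j, S → A j → ℝ) (hσ : IsPmfProfile σ) (i : ι) (s : S) (ai : A i) :
    ∑ s', margP P σ i s ai s' = 1 := by
  unfold margP
  rw [Finset.sum_comm]
  calc ∑ a : ∀ j, A j, ∑ s', othersProb σ i s ai a * P s a s'
      = ∑ a : ∀ j, A j, othersProb σ i s ai a :=
        Finset.sum_congr rfl fun a _ => by rw [← Finset.mul_sum, hP1, mul_one]
    _ = 1 := othersProb_sum_one σ hσ i s ai

private lemma prodProfile_nonneg (σ : ∀ j, S → A j → ℝ) (hσ : IsPmfProfile σ) (s : S)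
    (a : ∀ j, A j) : 0 ≤ ∏ j, σ j s (a j) :=
  Finset.prod_nonneg fun j _ => (hσ j s).1 (a j)

private lemma prodProfile_sum_one (σ : ∀ j, S → A j → ℝ) (hσ : IsPmfProfile σ) (s : S) :
    ∑ a : ∀ j, A j, ∏ j, σ j s (a j) = 1 := by
  rw [sum_prod_pi]; exact Finset.prod_eq_one fun j _ => (hσ j s).2

private lemma update_isPmfProfile (σ : ∀ j, S → A j → ℝ) (hσ : IsPmfProfile σ) (i : ι)
    (μ : S → A i → ℝ) (hμ : IsPmf μ) : IsPmfProfile (Function.update σ i μ) := by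
  intro j s
  by_cases h : j = i
  · subst h; rw [Function.update_self]; exact hμ s
  · rw [Function.update_of_ne h]; exact hσ j s

private lemma margR_close (r rhat : ι → S → (∀ j, A j) → ℝ) (σ : ∀ j, S → A j → ℝ)
    (hσ : IsPmfProfile σ) (ε : ℝ) (hε : ∀ i s a, |r i s a - rhat i s a| ≤ ε)
    (i : ι) (s : S) (ai : A i) :
    |margR r σ i s ai - margR rhat σ i s ai| ≤ ε := by
  unfold margR
  rw [← Finset.sum_sub_distrib]
  have h : ∀ a : ∀ j, A j, othersProb σ i s ai a * r i s a - othersProb σ i s ai a * rhat i s a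
      = othersProb σ i s ai a * (r i s a - rhat i s a) := fun a => by ring
  rw [Finset.sum_congr rfl fun a _ => h a]
  exact abs_sum_weighted_le _ _ _ (othersProb_nonneg σ hσ i s ai)
    (othersProb_sum_one σ hσ i s ai) (fun a => hε i s a)

private lemma marg_delta (P Phat : S → (∀ j, A j) → S → ℝ) (σ : ∀ j, S → A j → ℝ)
    (hσ : IsPmfProfile σ) (W : S → ℝ) (Δ : ℝ)
    (hΔ : ∀ s a, |∑ s', (P s a s' - Phat s a s') * W s'| ≤ Δ) (i : ι) (s : S) (ai : A i) :
    |∑ s', (margP P σ i s ai s' - margP Phat σ i s ai s') * W s'| ≤ Δ := by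
  have h : ∑ s', (margP P σ i s ai s' - margP Phat σ i s ai s') * W s'
      = ∑ a : ∀ j, A j, othersProb σ i s ai a * ∑ s', (P s a s' - Phat s a s') * W s' := by
    rw [sum_mul_sum_swap (othersProb σ i s ai) (fun a s' => P s a s' - Phat s a s') W]
    refine Finset.sum_congr rfl fun s' _ => ?_
    congr 1
    unfold margP
    rw [← Finset.sum_sub_distrib]
    exact Finset.sum_congr rfl fun a _ => by ring
  rw [h]
  exact abs_sum_weighted_le _ _ _ (othersProb_nonneg σ hσ i s ai)
    (othersProb_sum_one σ hσ i s ai) (fun a => hΔ s a)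

end Aux


/-- **Main robustness theorem for general-sum Markov games.**  If `Ĝ` is an
`(ε, δ)`-approximation of `G` with respect to an IPM with Minkowski functional `ρF`,
then any MPE `π̂` of `Ĝ` is an `α`-approximate MPE of `G` with
`α i = 2(ε + γ Δ i/(1-γ))` where
`Δ i = max_{s,a} |∑_{s'} (P(s'|s,a) - P̂(s'|s,a)) V̂^i_{π̂}(s')| ≤ δ ρF(V̂^i_{π̂})`. -/
theorem stmt16 {ι S : Type*} {A : ι → Type*}
    [Fintype ι] [DecidableEq ι] [Nonempty ι] [Fintype S] [Nonempty S]
    [∀ i, Fintype (A i)] [∀ i, Nonempty (A i)]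
    (γ : ℝ) (hγ0 : 0 < γ) (hγ1 : γ < 1)
    (P Phat : S → (∀ j, A j) → S → ℝ)
    (hP0 : ∀ s a s', 0 ≤ P s a s') (hP1 : ∀ s a, ∑ s', P s a s' = 1)
    (hPhat0 : ∀ s a s', 0 ≤ Phat s a s') (hPhat1 : ∀ s a, ∑ s', Phat s a s' = 1)
    (r rhat : ι → S → (∀ j, A j) → ℝ)
    -- IPM `dF` and Minkowski functional `ρF` of a function class `F`
    (dF : (S → ℝ) → (S → ℝ) → ℝ) (ρF : (S → ℝ) → ℝ)
    (hMink : ∀ (f : S → ℝ) (μ ν : S → ℝ), (∀ s, 0 ≤ μ s) → (∑ s, μ s = 1) →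
      (∀ s, 0 ≤ ν s) → (∑ s, ν s = 1) →
      |∑ s', f s' * μ s' - ∑ s', f s' * ν s'| ≤ ρF f * dF μ ν)
    (hρ0 : ∀ f, 0 ≤ ρF f)
    -- `Ĝ` is an `(ε, δ)`-approximation of `G`
    (ε δ : ℝ) (hε0 : 0 ≤ ε) (hδ0 : 0 ≤ δ)
    (hε : ∀ i s a, |r i s a - rhat i s a| ≤ ε)
    (hδ : ∀ s a, dF (P s a) (Phat s a) ≤ δ)
    -- value-function families of `G` and of `Ĝ`
    (Vfun : (∀ j, S → A j → ℝ) → ι → S → ℝ)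
    (hVfun : ∀ σ, IsPmfProfile σ → IsGameValue P r γ σ (Vfun σ))
    (Vhatfun : (∀ j, S → A j → ℝ) → ι → S → ℝ)
    (hVhatfun : ∀ σ, IsPmfProfile σ → IsGameValue Phat rhat γ σ (Vhatfun σ))
    -- `π̂` : an MPE of the approximate game `Ĝ`
    (πhat : ∀ j, S → A j → ℝ) (hπhat : IsPmfProfile πhat)
    (hMPE : ∀ i (σi : S → A i → ℝ), IsPmf σi →
      ∀ s, Vhatfun (Function.update πhat i σi) i s ≤ Vhatfun πhat i s) :
    -- `π̂` is an `α`-approximate MPE of `G` with the stated bounds on `α`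
    (∀ i (σi : S → A i → ℝ), IsPmf σi → ∀ s,
        Vfun (Function.update πhat i σi) i s -
          2 * (ε + γ * (⨆ q : S × (∀ j, A j),
            |∑ s', (P q.1 q.2 s' - Phat q.1 q.2 s') * Vhatfun πhat i s'|) / (1 - γ))
          ≤ Vfun πhat i s) ∧
      (∀ i, (⨆ q : S × (∀ j, A j),
          |∑ s', (P q.1 q.2 s' - Phat q.1 q.2 s') * Vhatfun πhat i s'|)
        ≤ δ * ρF (Vhatfun πhat i)) ∧
      (∀ i (σi : S → A i → ℝ), IsPmf σi → ∀ s,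
        Vfun (Function.update πhat i σi) i s -
          2 * (ε + γ * δ * ρF (Vhatfun πhat i) / (1 - γ)) ≤ Vfun πhat i s) := by
  have hγ' : 0 < 1 - γ := by linarith
  -- part 2 first
  have part2 : ∀ i, (⨆ q : S × (∀ j, A j),
      |∑ s', (P q.1 q.2 s' - Phat q.1 q.2 s') * Vhatfun πhat i s'|)
      ≤ δ * ρF (Vhatfun πhat i) := by
    intro i
    refine ciSup_le fun q => ?_
    have h1 : ∑ s', (P q.1 q.2 s' - Phat q.1 q.2 s') * Vhatfun πhat i s'
        = ∑ s', Vhatfun πhat i s' * P q.1 q.2 s'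
          - ∑ s', Vhatfun πhat i s' * Phat q.1 q.2 s' := by
      rw [← Finset.sum_sub_distrib]
      exact Finset.sum_congr rfl fun s' _ => by ring
    rw [h1]
    calc |∑ s', Vhatfun πhat i s' * P q.1 q.2 s' - ∑ s', Vhatfun πhat i s' * Phat q.1 q.2 s'|
        ≤ ρF (Vhatfun πhat i) * dF (P q.1 q.2) (Phat q.1 q.2) :=
          hMink _ _ _ (hP0 q.1 q.2) (hP1 q.1 q.2) (hPhat0 q.1 q.2) (hPhat1 q.1 q.2)
      _ ≤ ρF (Vhatfun πhat i) * δ :=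
          mul_le_mul_of_nonneg_left (hδ q.1 q.2) (hρ0 _)
      _ = δ * ρF (Vhatfun πhat i) := mul_comm _ _
  -- the core bound
  have core : ∀ i (σi : S → A i → ℝ), IsPmf σi → ∀ s,
      Vfun (Function.update πhat i σi) i s -
        2 * (ε + γ * (⨆ q : S × (∀ j, A j),
          |∑ s', (P q.1 q.2 s' - Phat q.1 q.2 s') * Vhatfun πhat i s'|) / (1 - γ))
        ≤ Vfun πhat i s := by
    intro i σi hσi
    set Δi : ℝ := ⨆ q : S × (∀ j, A j),
      |∑ s', (P q.1 q.2 s' - Phat q.1 q.2 s') * Vhatfun πhat i s'| with hΔidef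
    have hΔle : ∀ s a, |∑ s', (P s a s' - Phat s a s') * Vhatfun πhat i s'| ≤ Δi := by
      intro s a
      exact le_ciSup (f := fun q : S × (∀ j, A j) =>
          |∑ s', (P q.1 q.2 s' - Phat q.1 q.2 s') * Vhatfun πhat i s'|)
        (Set.Finite.bddAbove (Set.finite_range _)) (s, a)
    have hWval : IsGameValue Phat rhat γ πhat (Vhatfun πhat) := hVhatfun πhat hπhat
    have hVval : IsGameValue P r γ πhat (Vfun πhat) := hVfun πhat hπhat
    -- Step 1 : |V - W| ≤ ε + γΔ/(1-γ)
    obtain ⟨s0, -, hs0⟩ := Finset.exists_max_image Finset.univ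
      (fun s => |Vfun πhat i s - Vhatfun πhat i s|) ⟨Classical.arbitrary S, Finset.mem_univ _⟩
    have hM : ∀ s', |Vfun πhat i s' - Vhatfun πhat i s'|
        ≤ |Vfun πhat i s0 - Vhatfun πhat i s0| := fun s' => hs0 s' (Finset.mem_univ s')
    have hrec1 : |Vfun πhat i s0 - Vhatfun πhat i s0|
        ≤ (1-γ)*ε + γ*Δi + γ*|Vfun πhat i s0 - Vhatfun πhat i s0| := by
      have hdiff : Vfun πhat i s0 - Vhatfun πhat i s0
          = ∑ a : ∀ j, A j, (∏ j, πhat j s0 (a j)) *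
            ((1-γ)*(r i s0 a - rhat i s0 a)
             + γ*((∑ s', (P s0 a s' - Phat s0 a s') * Vhatfun πhat i s')
                  + ∑ s', P s0 a s' * (Vfun πhat i s' - Vhatfun πhat i s'))) := by
        rw [hVval i s0, hWval i s0, ← Finset.sum_sub_distrib]
        refine Finset.sum_congr rfl fun a _ => ?_
        rw [← mul_sub]
        congr 1
        have h1 : ∑ s', (P s0 a s' - Phat s0 a s') * Vhatfun πhat i s'
            + ∑ s', P s0 a s' * (Vfun πhat i s' - Vhatfun πhat i s')
            = ∑ s', P s0 a s' * Vfun πhat i s' - ∑ s', Phat s0 a s' * Vhatfun πhat i s' := by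
          rw [← Finset.sum_add_distrib, ← Finset.sum_sub_distrib]
          exact Finset.sum_congr rfl fun s' _ => by ring
        rw [h1]; ring
      refine (congrArg abs hdiff).trans_le (abs_sum_weighted_le _ _ _
        (prodProfile_nonneg πhat hπhat s0)
        (prodProfile_sum_one πhat hπhat s0) fun a => ?_)
      have hd : |r i s0 a - rhat i s0 a| ≤ ε := hε i s0 a
      have hX : |∑ s', (P s0 a s' - Phat s0 a s') * Vhatfun πhat i s'| ≤ Δi := hΔle s0 a
      have hY : |∑ s', P s0 a s' * (Vfun πhat i s' - Vhatfun πhat i s')|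
          ≤ |Vfun πhat i s0 - Vhatfun πhat i s0| :=
        abs_sum_weighted_le _ _ _ (hP0 s0 a) (hP1 s0 a) fun s' => hM s'
      calc |(1-γ)*(r i s0 a - rhat i s0 a)
              + γ*((∑ s', (P s0 a s' - Phat s0 a s') * Vhatfun πhat i s')
                  + ∑ s', P s0 a s' * (Vfun πhat i s' - Vhatfun πhat i s'))|
          ≤ |(1-γ)*(r i s0 a - rhat i s0 a)|
            + |γ*((∑ s', (P s0 a s' - Phat s0 a s') * Vhatfun πhat i s')
                  + ∑ s', P s0 a s' * (Vfun πhat i s' - Vhatfun πhat i s'))| := abs_add_le _ _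
        _ = (1-γ)*|r i s0 a - rhat i s0 a|
            + γ*|(∑ s', (P s0 a s' - Phat s0 a s') * Vhatfun πhat i s')
                  + ∑ s', P s0 a s' * (Vfun πhat i s' - Vhatfun πhat i s')| := by
            rw [abs_mul, abs_mul, abs_of_nonneg hγ'.le, abs_of_nonneg hγ0.le]
        _ ≤ (1-γ)*ε + γ*(Δi + |Vfun πhat i s0 - Vhatfun πhat i s0|) := by
            refine add_le_add (mul_le_mul_of_nonneg_left hd hγ'.le)
              (mul_le_mul_of_nonneg_left ?_ hγ0.le)
            exact (abs_add_le _ _).trans (add_le_add hX hY)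
        _ = (1-γ)*ε + γ*Δi + γ*|Vfun πhat i s0 - Vhatfun πhat i s0| := by ring
    have hstep1 : ∀ s, |Vfun πhat i s - Vhatfun πhat i s| ≤ ε + γ*Δi/(1-γ) :=
      fun s => (hM s).trans (solve_rec hγ1 hrec1)
    -- Step 2 : Bellman optimality of W in the marginalized MDP of Ĝ
    have hWmarg : IsMargValue Phat rhat γ πhat i (πhat i) (Vhatfun πhat i) := by
      apply toMarg
      rw [Function.update_eq_self]
      exact hWval
    have hgex : ∀ s : S, ∃ b : A i, ∀ ai : A i,
        (1-γ) * margR rhat πhat i s ai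
          + γ * ∑ s', margP Phat πhat i s ai s' * Vhatfun πhat i s'
        ≤ (1-γ) * margR rhat πhat i s b
          + γ * ∑ s', margP Phat πhat i s b s' * Vhatfun πhat i s' := by
      intro s
      obtain ⟨b, -, hb⟩ := Finset.exists_max_image Finset.univ
        (fun ai => (1-γ) * margR rhat πhat i s ai
          + γ * ∑ s', margP Phat πhat i s ai s' * Vhatfun πhat i s')
        ⟨Classical.arbitrary _, Finset.mem_univ _⟩
      exact ⟨b, fun ai => hb ai (Finset.mem_univ ai)⟩
    choose g hg using hgex
    set σg : S → A i → ℝ := fun s b => if b = g s then 1 else 0 with hσgdef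
    have hσgp : IsPmf σg := by
      intro s
      constructor
      · intro b; dsimp [σg]; split <;> norm_num
      · simp [σg, Finset.sum_ite_eq']
    have hUval : IsMargValue Phat rhat γ πhat i σg (Vhatfun (Function.update πhat i σg) i) :=
      toMarg _ _ _ _ _ _ _ (hVhatfun _ (update_isPmfProfile πhat hπhat i σg hσgp))
    have hUW : ∀ s, Vhatfun (Function.update πhat i σg) i s ≤ Vhatfun πhat i s :=
      hMPE i σg hσgp
    set U := Vhatfun (Function.update πhat i σg) i with hUdef
    have hUeq : ∀ s, U s = (1-γ) * margR rhat πhat i s (g s)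
        + γ * ∑ s', margP Phat πhat i s (g s) s' * U s' := by
      intro s
      rw [hUval s]
      simp [σg, ite_mul, Finset.sum_ite_eq']
    have hWle : ∀ s, Vhatfun πhat i s ≤ (1-γ) * margR rhat πhat i s (g s)
        + γ * ∑ s', margP Phat πhat i s (g s) s' * Vhatfun πhat i s' := by
      intro s
      rw [hWmarg s]
      exact sum_weighted_le _ _ _ (fun ai => (hπhat i s).1 ai) (hπhat i s).2 (hg s)
    obtain ⟨s2, -, hs2⟩ := Finset.exists_max_image Finset.univ
      (fun s => Vhatfun πhat i s - U s) ⟨Classical.arbitrary S, Finset.mem_univ _⟩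
    have hkey : ∀ s, Vhatfun πhat i s - U s ≤ γ * (Vhatfun πhat i s2 - U s2) := by
      intro s
      have h1 := hWle s
      have h2 := hUeq s
      have h3 : ∑ s', margP Phat πhat i s (g s) s' * Vhatfun πhat i s'
          - ∑ s', margP Phat πhat i s (g s) s' * U s'
          = ∑ s', margP Phat πhat i s (g s) s' * (Vhatfun πhat i s' - U s') := by
        rw [← Finset.sum_sub_distrib]
        exact Finset.sum_congr rfl fun s' _ => by ring
      have h4 : ∑ s', margP Phat πhat i s (g s) s' * (Vhatfun πhat i s' - U s')
          ≤ Vhatfun πhat i s2 - U s2 :=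
        sum_weighted_le _ _ _ (fun s' => margP_nonneg Phat hPhat0 πhat hπhat i s (g s) s')
          (margP_sum_one Phat hPhat1 πhat hπhat i s (g s))
          (fun s' => hs2 s' (Finset.mem_univ s'))
      have h5 : γ * ∑ s', margP Phat πhat i s (g s) s' * (Vhatfun πhat i s' - U s')
          ≤ γ * (Vhatfun πhat i s2 - U s2) := mul_le_mul_of_nonneg_left h4 hγ0.le
      have h6 : γ * ∑ s', margP Phat πhat i s (g s) s' * Vhatfun πhat i s'
          - γ * ∑ s', margP Phat πhat i s (g s) s' * U s'
          = γ * ∑ s', margP Phat πhat i s (g s) s' * (Vhatfun πhat i s' - U s') := by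
        rw [← mul_sub, h3]
      linarith
    have he2 : Vhatfun πhat i s2 - U s2 ≤ 0 := by nlinarith [hkey s2]
    have hWU : ∀ s, Vhatfun πhat i s = U s := by
      intro s
      have h1 := hkey s
      have h2 := hUW s
      have h3 : γ * (Vhatfun πhat i s2 - U s2) ≤ 0 :=
        mul_nonpos_of_nonneg_of_nonpos hγ0.le he2
      linarith
    have hopt : ∀ s (ai : A i), (1-γ) * margR rhat πhat i s ai
        + γ * ∑ s', margP Phat πhat i s ai s' * Vhatfun πhat i s' ≤ Vhatfun πhat i s := by
      intro s ai
      have h1 := hg s ai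
      have h2 := hUeq s
      have h3 : ∑ s', margP Phat πhat i s (g s) s' * U s'
          = ∑ s', margP Phat πhat i s (g s) s' * Vhatfun πhat i s' :=
        Finset.sum_congr rfl fun s' _ => by rw [hWU s']
      have h3' : γ * ∑ s', margP Phat πhat i s (g s) s' * U s'
          = γ * ∑ s', margP Phat πhat i s (g s) s' * Vhatfun πhat i s' := by rw [h3]
      rw [hWU s]
      linarith
    -- Step 3 : the deviation bound
    intro s
    have hπ'p : IsPmfProfile (Function.update πhat i σi) :=
      update_isPmfProfile πhat hπhat i σi hσi
    have hV'marg : IsMargValue P r γ πhat i σi (Vfun (Function.update πhat i σi) i) :=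
      toMarg _ _ _ _ _ _ _ (hVfun _ hπ'p)
    obtain ⟨s1, -, hs1⟩ := Finset.exists_max_image Finset.univ
      (fun s => Vfun (Function.update πhat i σi) i s - Vhatfun πhat i s)
      ⟨Classical.arbitrary S, Finset.mem_univ _⟩
    have hD : ∀ s', Vfun (Function.update πhat i σi) i s' - Vhatfun πhat i s'
        ≤ Vfun (Function.update πhat i σi) i s1 - Vhatfun πhat i s1 :=
      fun s' => hs1 s' (Finset.mem_univ s')
    have hrec3 : Vfun (Function.update πhat i σi) i s1 - Vhatfun πhat i s1
        ≤ (1-γ)*ε + γ*Δi + γ*(Vfun (Function.update πhat i σi) i s1 - Vhatfun πhat i s1) := by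
      have hA := hV'marg s1
      have hB : ∑ ai, σi s1 ai * ((1-γ) * margR rhat πhat i s1 ai
            + γ * ∑ s', margP Phat πhat i s1 ai s' * Vhatfun πhat i s')
          ≤ Vhatfun πhat i s1 :=
        sum_weighted_le _ _ _ (fun ai => (hσi s1).1 ai) (hσi s1).2 (fun ai => hopt s1 ai)
      have hC : ∑ ai, σi s1 ai * ((1-γ) * margR r πhat i s1 ai
            + γ * ∑ s', margP P πhat i s1 ai s' * Vfun (Function.update πhat i σi) i s')
          - ∑ ai, σi s1 ai * ((1-γ) * margR rhat πhat i s1 ai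
            + γ * ∑ s', margP Phat πhat i s1 ai s' * Vhatfun πhat i s')
          ≤ (1-γ)*ε + γ*Δi
            + γ*(Vfun (Function.update πhat i σi) i s1 - Vhatfun πhat i s1) := by
        rw [← Finset.sum_sub_distrib]
        have heq : ∀ ai, σi s1 ai * ((1-γ) * margR r πhat i s1 ai
              + γ * ∑ s', margP P πhat i s1 ai s' * Vfun (Function.update πhat i σi) i s')
            - σi s1 ai * ((1-γ) * margR rhat πhat i s1 ai
              + γ * ∑ s', margP Phat πhat i s1 ai s' * Vhatfun πhat i s')
            = σi s1 ai * ((1-γ) * (margR r πhat i s1 ai - margR rhat πhat i s1 ai)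
              + γ * ((∑ s', (margP P πhat i s1 ai s' - margP Phat πhat i s1 ai s')
                        * Vhatfun πhat i s')
                + ∑ s', margP P πhat i s1 ai s'
                    * (Vfun (Function.update πhat i σi) i s' - Vhatfun πhat i s'))) := by
          intro ai
          have h1 : ∑ s', (margP P πhat i s1 ai s' - margP Phat πhat i s1 ai s')
                * Vhatfun πhat i s'
              + ∑ s', margP P πhat i s1 ai s'
                  * (Vfun (Function.update πhat i σi) i s' - Vhatfun πhat i s')
              = ∑ s', margP P πhat i s1 ai s' * Vfun (Function.update πhat i σi) i s'
                - ∑ s', margP Phat πhat i s1 ai s' * Vhatfun πhat i s' := by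
            rw [← Finset.sum_add_distrib, ← Finset.sum_sub_distrib]
            exact Finset.sum_congr rfl fun s' _ => by ring
          rw [← mul_sub]
          congr 1
          rw [h1]; ring
        rw [Finset.sum_congr rfl fun ai _ => heq ai]
        refine sum_weighted_le _ _ _ (fun ai => (hσi s1).1 ai) (hσi s1).2 fun ai => ?_
        have hd : margR r πhat i s1 ai - margR rhat πhat i s1 ai ≤ ε :=
          (abs_le.mp (margR_close r rhat πhat hπhat ε hε i s1 ai)).2
        have hX : ∑ s', (margP P πhat i s1 ai s' - margP Phat πhat i s1 ai s')
              * Vhatfun πhat i s' ≤ Δi :=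
          (abs_le.mp (marg_delta P Phat πhat hπhat (Vhatfun πhat i) Δi hΔle i s1 ai)).2
        have hY : ∑ s', margP P πhat i s1 ai s'
              * (Vfun (Function.update πhat i σi) i s' - Vhatfun πhat i s')
            ≤ Vfun (Function.update πhat i σi) i s1 - Vhatfun πhat i s1 :=
          sum_weighted_le _ _ _ (fun s' => margP_nonneg P hP0 πhat hπhat i s1 ai s')
            (margP_sum_one P hP1 πhat hπhat i s1 ai) (fun s' => hD s')
        have := add_le_add hX hY
        nlinarith [mul_le_mul_of_nonneg_left hd hγ'.le,
          mul_le_mul_of_nonneg_left this hγ0.le]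
      linarith
    have hstep3 : Vfun (Function.update πhat i σi) i s1 - Vhatfun πhat i s1
        ≤ ε + γ*Δi/(1-γ) := solve_rec hγ1 hrec3
    have hlow : -(ε + γ*Δi/(1-γ)) ≤ Vfun πhat i s - Vhatfun πhat i s :=
      (abs_le.mp (hstep1 s)).1
    have := (hD s).trans hstep3
    linarith
  refine ⟨core, part2, fun i σi hσi s => ?_⟩
  have h1 := core i σi hσi s
  have h2 := part2 i
  have h3 : γ * (⨆ q : S × (∀ j, A j),
      |∑ s', (P q.1 q.2 s' - Phat q.1 q.2 s') * Vhatfun πhat i s'|) / (1 - γ)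
      ≤ γ * (δ * ρF (Vhatfun πhat i)) / (1 - γ) := by
    exact (div_le_div_iff_of_pos_right hγ').mpr (mul_le_mul_of_nonneg_left h2 hγ0.le)
  have h4 : γ * (δ * ρF (Vhatfun πhat i)) / (1 - γ) = γ * δ * ρF (Vhatfun πhat i) / (1 - γ) := by
    ring
  linarith
end

section
/- (TV corollary for games.) If $\widehat{\mathscr{G}}$ is an $(\varepsilon,\delta)$-approximation of $\mathscr{G}$ with transition approximation in total variation distance, then any MPE $\hat\pi$ of $\widehat{\mathscr{G}}$ is an $\alpha$-MPE of $\mathscr{G}$ with $\alpha^i \le 2(\varepsilon + \gamma\delta\,\mathrm{Span}(\hat r^i)/(1-\gamma))$ for every player $i$. -/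
open Finset Classical

section Aux

private lemma wsum_le {B : Type*} [Fintype B] {w f : B → ℝ} {c : ℝ}
    (hw0 : ∀ b, 0 ≤ w b) (hw1 : ∑ b, w b = 1) (hf : ∀ b, f b ≤ c) :
    ∑ b, w b * f b ≤ c := by
  calc ∑ b, w b * f b ≤ ∑ b, w b * c :=
        Finset.sum_le_sum fun b _ => mul_le_mul_of_nonneg_left (hf b) (hw0 b)
    _ = c := by rw [← Finset.sum_mul, hw1, one_mul]

private lemma le_wsum {B : Type*} [Fintype B] {w f : B → ℝ} {c : ℝ}
    (hw0 : ∀ b, 0 ≤ w b) (hw1 : ∑ b, w b = 1) (hf : ∀ b, c ≤ f b) :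
    c ≤ ∑ b, w b * f b := by
  calc c = ∑ b, w b * c := by rw [← Finset.sum_mul, hw1, one_mul]
    _ ≤ ∑ b, w b * f b :=
        Finset.sum_le_sum fun b _ => mul_le_mul_of_nonneg_left (hf b) (hw0 b)

private lemma abs_wsum_le {B : Type*} [Fintype B] {w f : B → ℝ} {c : ℝ}
    (hw0 : ∀ b, 0 ≤ w b) (hw1 : ∑ b, w b = 1) (hf : ∀ b, |f b| ≤ c) :
    |∑ b, w b * f b| ≤ c := by
  calc |∑ b, w b * f b| ≤ ∑ b, |w b * f b| := Finset.abs_sum_le_sum_abs _ _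
    _ = ∑ b, w b * |f b| :=
        Finset.sum_congr rfl fun b _ => by rw [abs_mul, abs_of_nonneg (hw0 b)]
    _ ≤ c := wsum_le hw0 hw1 hf

private lemma value_le_aux {S B : Type*} [Fintype S] [Nonempty S] [Fintype B]
    {γ : ℝ} (hγ0 : 0 ≤ γ) (hγ1 : γ < 1)
    {w : S → B → ℝ} (hw0 : ∀ s b, 0 ≤ w s b) (hw1 : ∀ s, ∑ b, w s b = 1)
    {P : S → B → S → ℝ} (hP0 : ∀ s b s', 0 ≤ P s b s')
    (hP1 : ∀ s b, ∑ s', P s b s' = 1)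
    {r : S → B → ℝ} {M : ℝ} (hrM : ∀ s b, r s b ≤ M)
    {V : S → ℝ}
    (hV : ∀ s, V s = ∑ b, w s b * ((1 - γ) * r s b + γ * ∑ s', P s b s' * V s')) :
    ∀ s, V s ≤ M := by
  have hne : (Finset.univ : Finset S).Nonempty := Finset.univ_nonempty
  set Mv := Finset.univ.sup' hne V with hMv
  have hVle : ∀ s, V s ≤ Mv := fun s => Finset.le_sup' V (Finset.mem_univ s)
  have h1γ : (0:ℝ) < 1 - γ := by linarith
  have hstep : Mv ≤ (1 - γ) * M + γ * Mv := by
    apply Finset.sup'_le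
    intro s _
    rw [hV s]
    apply wsum_le (hw0 s) (hw1 s)
    intro b
    have h1 : ∑ s', P s b s' * V s' ≤ Mv := wsum_le (hP0 s b) (hP1 s b) hVle
    have h2 := mul_le_mul_of_nonneg_left (hrM s b) h1γ.le
    have h3 := mul_le_mul_of_nonneg_left h1 hγ0
    linarith
  have hMvM : Mv ≤ M := by nlinarith
  exact fun s => (hVle s).trans hMvM

private lemma le_value_aux {S B : Type*} [Fintype S] [Nonempty S] [Fintype B]
    {γ : ℝ} (hγ0 : 0 ≤ γ) (hγ1 : γ < 1)
    {w : S → B → ℝ} (hw0 : ∀ s b, 0 ≤ w s b) (hw1 : ∀ s, ∑ b, w s b = 1)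
    {P : S → B → S → ℝ} (hP0 : ∀ s b s', 0 ≤ P s b s')
    (hP1 : ∀ s b, ∑ s', P s b s' = 1)
    {r : S → B → ℝ} {m : ℝ} (hrm : ∀ s b, m ≤ r s b)
    {V : S → ℝ}
    (hV : ∀ s, V s = ∑ b, w s b * ((1 - γ) * r s b + γ * ∑ s', P s b s' * V s')) :
    ∀ s, m ≤ V s := by
  have hne : (Finset.univ : Finset S).Nonempty := Finset.univ_nonempty
  set mv := Finset.univ.inf' hne V with hmv
  have hVle : ∀ s, mv ≤ V s := fun s => Finset.inf'_le V (Finset.mem_univ s)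
  have h1γ : (0:ℝ) < 1 - γ := by linarith
  have hstep : (1 - γ) * m + γ * mv ≤ mv := by
    apply Finset.le_inf'
    intro s _
    rw [hV s]
    apply le_wsum (hw0 s) (hw1 s)
    intro b
    have h1 : mv ≤ ∑ s', P s b s' * V s' := le_wsum (hP0 s b) (hP1 s b) hVle
    have h2 := mul_le_mul_of_nonneg_left (hrm s b) h1γ.le
    have h3 := mul_le_mul_of_nonneg_left h1 hγ0
    linarith
  have hmvm : m ≤ mv := by nlinarith
  exact fun s => hmvm.trans (hVle s)

private lemma diff_aux {S B : Type*} [Fintype S] [Nonempty S] [Fintype B]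
    {γ ε δ c h : ℝ} (hγ0 : 0 ≤ γ) (hγ1 : γ < 1) (hh0 : 0 ≤ h)
    {w : S → B → ℝ} (hw0 : ∀ s b, 0 ≤ w s b) (hw1 : ∀ s, ∑ b, w s b = 1)
    {P Phat : S → B → S → ℝ}
    (hP0 : ∀ s b s', 0 ≤ P s b s') (hP1 : ∀ s b, ∑ s', P s b s' = 1)
    (hPhat1 : ∀ s b, ∑ s', Phat s b s' = 1)
    {r rhat : S → B → ℝ} (hrε : ∀ s b, |r s b - rhat s b| ≤ ε)
    (hδ : ∀ s b, (1 / 2) * ∑ s', |P s b s' - Phat s b s'| ≤ δ)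
    {V Vhat : S → ℝ}
    (hVc : ∀ s, |Vhat s - c| ≤ h)
    (hV : ∀ s, V s = ∑ b, w s b * ((1 - γ) * r s b + γ * ∑ s', P s b s' * V s'))
    (hVhat : ∀ s, Vhat s =
      ∑ b, w s b * ((1 - γ) * rhat s b + γ * ∑ s', Phat s b s' * Vhat s')) :
    ∀ s, |V s - Vhat s| ≤ ε + γ * (2 * δ * h) / (1 - γ) := by
  have hne : (Finset.univ : Finset S).Nonempty := Finset.univ_nonempty
  have h1γ : (0:ℝ) < 1 - γ := by linarith
  set D := Finset.univ.sup' hne (fun s => |V s - Vhat s|) with hD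
  have hDle : ∀ s, |V s - Vhat s| ≤ D :=
    fun s => Finset.le_sup' (fun s => |V s - Vhat s|) (Finset.mem_univ s)
  have hstep : D ≤ (1 - γ) * ε + γ * (2 * δ * h + D) := by
    apply Finset.sup'_le
    intro s _
    rw [hV s, hVhat s, ← Finset.sum_sub_distrib]
    rw [Finset.sum_congr rfl fun b _ => (mul_sub (w s b) _ _).symm]
    apply abs_wsum_le (hw0 s) (hw1 s)
    intro b
    have hkey : (∑ s', P s b s' * V s') - ∑ s', Phat s b s' * Vhat s'
        = (∑ s', (P s b s' - Phat s b s') * (Vhat s' - c))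
          + ∑ s', P s b s' * (V s' - Vhat s') := by
      have e1 : ∑ s', (P s b s' - Phat s b s') * c = 0 := by
        rw [← Finset.sum_mul, Finset.sum_sub_distrib, hP1 s b, hPhat1 s b]
        ring
      have e2 : ∀ s' : S, (P s b s' - Phat s b s') * (Vhat s' - c)
          + P s b s' * (V s' - Vhat s')
          = (P s b s' * V s' - Phat s b s' * Vhat s')
            - (P s b s' - Phat s b s') * c := fun s' => by ring
      rw [← Finset.sum_add_distrib, Finset.sum_congr rfl fun s' _ => e2 s',
        Finset.sum_sub_distrib, e1, Finset.sum_sub_distrib]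
      ring
    have hb1 : |∑ s', (P s b s' - Phat s b s') * (Vhat s' - c)| ≤ 2 * δ * h := by
      calc |∑ s', (P s b s' - Phat s b s') * (Vhat s' - c)|
          ≤ ∑ s', |(P s b s' - Phat s b s') * (Vhat s' - c)| :=
            Finset.abs_sum_le_sum_abs _ _
        _ = ∑ s', |P s b s' - Phat s b s'| * |Vhat s' - c| := by
            simp [abs_mul]
        _ ≤ ∑ s', |P s b s' - Phat s b s'| * h :=
            Finset.sum_le_sum fun s' _ =>
              mul_le_mul_of_nonneg_left (hVc s') (abs_nonneg _)
        _ = (∑ s', |P s b s' - Phat s b s'|) * h := (Finset.sum_mul _ _ _).symm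
        _ ≤ (2 * δ) * h := by
            have := hδ s b
            have hs : ∑ s', |P s b s' - Phat s b s'| ≤ 2 * δ := by linarith
            exact mul_le_mul_of_nonneg_right hs hh0
        _ = 2 * δ * h := by ring
    have hb2 : |∑ s', P s b s' * (V s' - Vhat s')| ≤ D :=
      abs_wsum_le (hP0 s b) (hP1 s b) hDle
    have hrw : ((1 - γ) * r s b + γ * ∑ s', P s b s' * V s')
        - ((1 - γ) * rhat s b + γ * ∑ s', Phat s b s' * Vhat s')
        = (1 - γ) * (r s b - rhat s b)
          + γ * ((∑ s', P s b s' * V s') - ∑ s', Phat s b s' * Vhat s') := by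
      ring
    rw [hrw, hkey]
    calc |(1 - γ) * (r s b - rhat s b)
          + γ * ((∑ s', (P s b s' - Phat s b s') * (Vhat s' - c))
            + ∑ s', P s b s' * (V s' - Vhat s'))|
        ≤ |(1 - γ) * (r s b - rhat s b)|
          + |γ * ((∑ s', (P s b s' - Phat s b s') * (Vhat s' - c))
            + ∑ s', P s b s' * (V s' - Vhat s'))| := abs_add_le _ _
      _ ≤ (1 - γ) * ε + γ * (2 * δ * h + D) := by
          have t1 : |(1 - γ) * (r s b - rhat s b)| ≤ (1 - γ) * ε := by
            rw [abs_mul, abs_of_nonneg h1γ.le]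
            exact mul_le_mul_of_nonneg_left (hrε s b) h1γ.le
          have t2 : |(∑ s', (P s b s' - Phat s b s') * (Vhat s' - c))
              + ∑ s', P s b s' * (V s' - Vhat s')| ≤ 2 * δ * h + D :=
            (abs_add_le _ _).trans (add_le_add hb1 hb2)
          have t3 : |γ * ((∑ s', (P s b s' - Phat s b s') * (Vhat s' - c))
              + ∑ s', P s b s' * (V s' - Vhat s'))| ≤ γ * (2 * δ * h + D) := by
            rw [abs_mul, abs_of_nonneg hγ0]
            exact mul_le_mul_of_nonneg_left t2 hγ0
          linarith
  intro s
  have h2 : (D - ε) * (1 - γ) ≤ γ * (2 * δ * h) := by nlinarith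
  have h3 : D - ε ≤ γ * (2 * δ * h) / (1 - γ) := (le_div_iff₀ h1γ).mpr h2
  linarith [hDle s]

end Aux

/-- **Total-variation corollary for games.**  If `Ĝ` is an `(ε, δ)`-approximation
of `G` in total variation, then any MPE `π̂` of `Ĝ` is an `α`-MPE of `G` with
`α i ≤ 2(ε + γ δ Span(r̂ i)/(1-γ))`. -/
theorem stmt17 {ι S : Type*} {A : ι → Type*}
    [Fintype ι] [DecidableEq ι] [Nonempty ι] [Fintype S] [Nonempty S]
    [∀ i, Fintype (A i)] [∀ i, Nonempty (A i)]
    (γ : ℝ) (hγ0 : 0 < γ) (hγ1 : γ < 1)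
    (P Phat : S → (∀ j, A j) → S → ℝ)
    (hP0 : ∀ s a s', 0 ≤ P s a s') (hP1 : ∀ s a, ∑ s', P s a s' = 1)
    (hPhat0 : ∀ s a s', 0 ≤ Phat s a s') (hPhat1 : ∀ s a, ∑ s', Phat s a s' = 1)
    (r rhat : ι → S → (∀ j, A j) → ℝ)
    (ε δ : ℝ) (hε0 : 0 ≤ ε) (hδ0 : 0 ≤ δ)
    (hε : ∀ i s a, |r i s a - rhat i s a| ≤ ε)
    -- transition approximation in total variation distance
    (hδ : ∀ s a, (1 / 2) * ∑ s', |P s a s' - Phat s a s'| ≤ δ)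
    -- value-function families of `G` and of `Ĝ`
    (Vfun : (∀ j, S → A j → ℝ) → ι → S → ℝ)
    (hVfun : ∀ σ, IsPmfProfile σ → IsGameValue P r γ σ (Vfun σ))
    (Vhatfun : (∀ j, S → A j → ℝ) → ι → S → ℝ)
    (hVhatfun : ∀ σ, IsPmfProfile σ → IsGameValue Phat rhat γ σ (Vhatfun σ))
    -- `π̂` : an MPE of the approximate game `Ĝ`
    (πhat : ∀ j, S → A j → ℝ) (hπhat : IsPmfProfile πhat)
    (hMPE : ∀ i (σi : S → A i → ℝ), IsPmf σi →
      ∀ s, Vhatfun (Function.update πhat i σi) i s ≤ Vhatfun πhat i s) :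
    -- `π̂` is an `α`-MPE of `G` with `α i = 2(ε + γ δ Span(r̂ i)/(1-γ))`
    ∀ i (σi : S → A i → ℝ), IsPmf σi → ∀ s,
      Vfun (Function.update πhat i σi) i s -
        2 * (ε + γ * δ * ((⨆ q : S × (∀ j, A j), rhat i q.1 q.2) -
          ⨅ q : S × (∀ j, A j), rhat i q.1 q.2) / (1 - γ))
        ≤ Vfun πhat i s := by
  intro i σi hσi s
  set M := ⨆ q : S × (∀ j, A j), rhat i q.1 q.2 with hM
  set m := ⨅ q : S × (∀ j, A j), rhat i q.1 q.2 with hm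
  have hrM : ∀ s a, rhat i s a ≤ M := fun s a =>
    le_ciSup (f := fun q : S × (∀ j, A j) => rhat i q.1 q.2) (Set.finite_range _).bddAbove (s, a)
  have hrm : ∀ s a, m ≤ rhat i s a := fun s a =>
    ciInf_le (f := fun q : S × (∀ j, A j) => rhat i q.1 q.2) (Set.finite_range _).bddBelow (s, a)
  obtain ⟨q0⟩ : Nonempty (S × (∀ j, A j)) := inferInstance
  have hmM : m ≤ M := (hrm q0.1 q0.2).trans (hrM q0.1 q0.2)
  have hh0 : (0:ℝ) ≤ (M - m) / 2 := by linarith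
  have key : ∀ σ : ∀ j, S → A j → ℝ, IsPmfProfile σ → ∀ s,
      |Vfun σ i s - Vhatfun σ i s|
        ≤ ε + γ * (2 * δ * ((M - m) / 2)) / (1 - γ) := by
    intro σ hσ
    have hw0 : ∀ (s : S) (a : ∀ j, A j), 0 ≤ ∏ j, σ j s (a j) :=
      fun s a => Finset.prod_nonneg fun j _ => (hσ j s).1 (a j)
    have hw1 : ∀ s : S, ∑ a : ∀ j, A j, ∏ j, σ j s (a j) = 1 := by
      intro s
      rw [← Fintype.prod_sum (f := fun j aj => σ j s aj)]
      exact Finset.prod_eq_one fun j _ => (hσ j s).2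
    have hVb_up : ∀ s, Vhatfun σ i s ≤ M :=
      value_le_aux (w := fun s a => ∏ j, σ j s (a j)) (P := Phat)
        (r := fun s a => rhat i s a) (V := Vhatfun σ i)
        hγ0.le hγ1 hw0 hw1 hPhat0 hPhat1 hrM (fun s => hVhatfun σ hσ i s)
    have hVb_lo : ∀ s, m ≤ Vhatfun σ i s :=
      le_value_aux (w := fun s a => ∏ j, σ j s (a j)) (P := Phat)
        (r := fun s a => rhat i s a) (V := Vhatfun σ i)
        hγ0.le hγ1 hw0 hw1 hPhat0 hPhat1 hrm (fun s => hVhatfun σ hσ i s)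
    have hVc : ∀ s, |Vhatfun σ i s - (M + m) / 2| ≤ (M - m) / 2 := fun s =>
      abs_le.mpr ⟨by linarith [hVb_lo s], by linarith [hVb_up s]⟩
    exact diff_aux (c := (M + m) / 2) (h := (M - m) / 2)
      (w := fun s a => ∏ j, σ j s (a j)) (P := P) (Phat := Phat)
      (r := fun s a => r i s a) (rhat := fun s a => rhat i s a)
      (V := Vfun σ i) (Vhat := Vhatfun σ i)
      hγ0.le hγ1 hh0 hw0 hw1 hP0 hP1 hPhat1 (fun s a => hε i s a) hδ hVc
      (fun s => hVfun σ hσ i s) (fun s => hVhatfun σ hσ i s)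
  have hdev : IsPmfProfile (Function.update πhat i σi) := by
    intro j s'
    rcases eq_or_ne j i with rfl | hne
    · rw [Function.update_self]
      exact hσi s'
    · rw [Function.update_of_ne hne]
      exact hπhat j s'
  have k1 := abs_le.mp (key _ hdev s)
  have k2 := abs_le.mp (key _ hπhat s)
  have k3 := hMPE i σi hσi s
  have heq : γ * (2 * δ * ((M - m) / 2)) / (1 - γ)
      = γ * δ * (M - m) / (1 - γ) := by ring
  linarith [k1.2, k2.1, k3]
end
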